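/- arXiv:1501.04719 — 5 statements merged into one kernel-verified Lean document; each statement's English description precedes it below -/
import Mathlib

section
/- Let X, Y, μ > 0 and let (fˣ, fʸ, fᶻ, τˣ, τʸ, τᶻ) satisfy the six wrench-cone inequalities |fˣ| ≤ μ fᶻ, |fʸ| ≤ μ fᶻ, fᶻ > 0, |τˣ| ≤ Y fᶻ, |τʸ| ≤ X fᶻ, τ_min ≤ τᶻ ≤ τ_max, where τ_min = −μ(X+Y)fᶻ + |Y fˣ − μτˣ| + |X fʸ − μτʸ| and τ_max = μ(X+Y)fᶻ − |Y fˣ + μτˣ| − |X fʸ + μτʸ|. Then τ_min ≤ τ_max, i.e., the yaw-torque interval is nonempty. -/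
/-!
Write `a = Y fˣ`, `b = μ τˣ`, `c = X fʸ`, `d = μ τʸ`; the claim is
`|a - b| + |a + b| + |c - d| + |c + d| ≤ 2 μ (X + Y) fᶻ`. Since `|a - b| + |a + b| = 2 max |a| |b|`,
it suffices that `|a|, |b| ≤ μ Y fᶻ` and `|c|, |d| ≤ μ X fᶻ`, which are the friction and
torque bounds scaled by `Y`, `μ` and `X`.
-/

theorem abs_sub_add_abs_add_le {α : Type*} [Field α] [LinearOrder α] [IsStrictOrderedRing α]
    {a b M : α} (ha : |a| ≤ M) (hb : |b| ≤ M) :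
    |a - b| + |a + b| ≤ 2 * M := by
  obtain ⟨ha₁, ha₂⟩ := abs_le.mp ha
  obtain ⟨hb₁, hb₂⟩ := abs_le.mp hb
  rcases abs_cases (a - b) with ⟨h₁, _⟩ | ⟨h₁, _⟩ <;>
  rcases abs_cases (a + b) with ⟨h₂, _⟩ | ⟨h₂, _⟩ <;>
  rw [h₁, h₂] <;> linarith

theorem abs_mul_le_mul_of_abs_le {α : Type*} [Ring α] [LinearOrder α] [IsOrderedRing α]
    {c x M : α} (hc : 0 ≤ c) (hx : |x| ≤ M) : |c * x| ≤ c * M := by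
  rw [abs_mul, abs_of_nonneg hc]
  exact mul_le_mul_of_nonneg_left hx hc

theorem yaw_interval_nonempty_general
    (X Y μ fx fy fz τx τy : ℝ) (hX : 0 < X) (hY : 0 < Y) (hμ : 0 < μ)
    (h1 : |fx| ≤ μ * fz) (h2 : |fy| ≤ μ * fz)
    (h4 : |τx| ≤ Y * fz) (h5 : |τy| ≤ X * fz) :
    -μ * (X + Y) * fz + |Y * fx - μ * τx| + |X * fy - μ * τy| ≤
      μ * (X + Y) * fz - |Y * fx + μ * τx| - |X * fy + μ * τy| := by
  have hx : |Y * fx - μ * τx| + |Y * fx + μ * τx| ≤ 2 * (μ * (Y * fz)) := by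
    refine abs_sub_add_abs_add_le ?_ (abs_mul_le_mul_of_abs_le hμ.le h4)
    rw [mul_left_comm]
    exact abs_mul_le_mul_of_abs_le hY.le h1
  have hy : |X * fy - μ * τy| + |X * fy + μ * τy| ≤ 2 * (μ * (X * fz)) := by
    refine abs_sub_add_abs_add_le ?_ (abs_mul_le_mul_of_abs_le hμ.le h5)
    rw [mul_left_comm]
    exact abs_mul_le_mul_of_abs_le hX.le h2
  linarith

/-- The yaw-torque interval of the rectangular wrench cone is nonempty. -/
theorem yaw_interval_nonempty
    (X Y μ fx fy fz τx τy : ℝ) (hX : 0 < X) (hY : 0 < Y) (hμ : 0 < μ)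
    (h1 : |fx| ≤ μ * fz) (h2 : |fy| ≤ μ * fz) (h3 : 0 < fz)
    (h4 : |τx| ≤ Y * fz) (h5 : |τy| ≤ X * fz) :
    -μ * (X + Y) * fz + |Y * fx - μ * τx| + |X * fy - μ * τy| ≤
      μ * (X + Y) * fz - |Y * fx + μ * τx| - |X * fy + μ * τy| :=
  yaw_interval_nonempty_general X Y μ fx fy fz τx τy hX hY hμ h1 h2 h4 h5
end

section
/- With τ_min = −μ(X+Y)fᶻ + |Yfˣ − μτˣ| + |Xfʸ − μτʸ| and τ_max = μ(X+Y)fᶻ − |Yfˣ + μτˣ| − |Xfʸ + μτʸ|, the midpoint (τ_min + τ_max)/2 equals sgn(−fˣτˣ)·min(Y|fˣ|, μ|τˣ|) + sgn(−fʸτʸ)·min(X|fʸ|, μ|τʸ|). -/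
theorem Real.sign_mul_of_pos {c : ℝ} (hc : 0 < c) (x : ℝ) :
    Real.sign (c * x) = Real.sign x := by
  rcases lt_trichotomy x 0 with hx | rfl | hx
  · rw [Real.sign_of_neg hx, Real.sign_of_neg (mul_neg_of_pos_of_neg hc hx)]
  · simp
  · rw [Real.sign_of_pos hx, Real.sign_of_pos (mul_pos hc hx)]

theorem abs_sub_sub_abs_add_of_nonneg {a b : ℝ} (ha : 0 ≤ a) (hb : 0 ≤ b) :
    |a - b| - |a + b| = -2 * min a b := by
  rw [abs_of_nonneg (add_nonneg ha hb)]
  rcases le_total a b with hab | hab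
  · rw [min_eq_left hab, abs_of_nonpos (sub_nonpos.2 hab)]; ring
  · rw [min_eq_right hab, abs_of_nonneg (sub_nonneg.2 hab)]; ring

theorem abs_sub_sub_abs_add_of_mul_nonneg {a b : ℝ} (h : 0 ≤ a * b) :
    |a - b| - |a + b| = -2 * min |a| |b| := by
  rcases mul_nonneg_iff.1 h with ⟨ha, hb⟩ | ⟨ha, hb⟩
  · rw [abs_of_nonneg ha, abs_of_nonneg hb]
    exact abs_sub_sub_abs_add_of_nonneg ha hb
  · have h := abs_sub_sub_abs_add_of_nonneg (neg_nonneg.2 ha) (neg_nonneg.2 hb)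
    rw [abs_of_nonpos ha, abs_of_nonpos hb, ← h, ← abs_neg (a - b), ← abs_neg (a + b)]
    ring_nf

theorem abs_sub_sub_abs_add (a b : ℝ) :
    |a - b| - |a + b| = 2 * Real.sign (-(a * b)) * min |a| |b| := by
  rcases lt_trichotomy (a * b) 0 with h | h | h
  · have h' := abs_sub_sub_abs_add_of_mul_nonneg (a := a) (b := -b) (by rw [mul_neg]; linarith)
    rw [sub_neg_eq_add, ← sub_eq_add_neg, abs_neg] at h'
    rw [Real.sign_of_pos (neg_pos.2 h)]
    linarith
  · rcases mul_eq_zero.1 h with rfl | rfl <;> simp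
  · rw [Real.sign_of_neg (neg_neg_of_pos h), abs_sub_sub_abs_add_of_mul_nonneg h.le]
    ring

theorem abs_mul_sub_sub_abs_mul_add {p q : ℝ} (hp : 0 < p) (hq : 0 < q) (x y : ℝ) :
    |p * x - q * y| - |p * x + q * y| = 2 * Real.sign (-(x * y)) * min (p * |x|) (q * |y|) := by
  rw [abs_sub_sub_abs_add, abs_mul, abs_mul, abs_of_pos hp, abs_of_pos hq,
    show -(p * x * (q * y)) = p * q * -(x * y) by ring, Real.sign_mul_of_pos (mul_pos hp hq)]

/-- The midpoint of the yaw-torque interval equals the "safe" yaw torque. -/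
theorem yaw_midpoint_eq_safe
    (X Y μ fx fy fz τx τy : ℝ) (hX : 0 < X) (hY : 0 < Y) (hμ : 0 < μ) :
    ((-μ * (X + Y) * fz + |Y * fx - μ * τx| + |X * fy - μ * τy|) +
      (μ * (X + Y) * fz - |Y * fx + μ * τx| - |X * fy + μ * τy|)) / 2 =
    Real.sign (-(fx * τx)) * min (Y * |fx|) (μ * |τx|) +
      Real.sign (-(fy * τy)) * min (X * |fy|) (μ * |τy|) := by
  have hx := abs_mul_sub_sub_abs_mul_add hY hμ fx τx
  have hy := abs_mul_sub_sub_abs_mul_add hX hμ fy τy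
  linarith
end

section
/- Suppose |fˣ| = μfᶻ (Coulomb friction saturated in x), |τˣ| = Yfᶻ, |fʸ| = μfᶻ, and |τʸ| = Xfᶻ with fᶻ > 0, and that fˣτˣ ≤ 0 and fʸτʸ ≤ 0 are not assumed; if additionally max(Y|fˣ|, μ|τˣ|) + max(X|fʸ|, μ|τʸ|) = μ(X+Y)fᶻ, then τ_min = τ_max, i.e., there is a unique admissible yaw torque τᶻ = sgn(−fˣτˣ)min(Y|fˣ|, μ|τˣ|) + sgn(−fʸτʸ)min(X|fʸ|, μ|τʸ|). -/
/-!
Once `Y |fˣ| = μ |τˣ|`, the numbers `Y fˣ` and `μ τˣ` have equal modulus, so one of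
`Y fˣ ∓ μ τˣ` vanishes and the other has modulus `2 Y |fˣ|`; which one is decided by
`sgn (-fˣ τˣ)`. The same holds in `y`, and substituting into `τ_min` and `τ_max` gives the
same value `sgn (-fˣ τˣ) Y |fˣ| + sgn (-fʸ τʸ) X |fʸ|` for both.
-/

namespace Real

theorem sign_mul_of_pos_s4 {c : ℝ} (hc : 0 < c) (r : ℝ) : sign (c * r) = sign r := by
  rcases lt_trichotomy r 0 with hr | rfl | hr
  · rw [sign_of_neg hr, sign_of_neg (mul_neg_of_pos_of_neg hc hr)]
  · rw [mul_zero]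
  · rw [sign_of_pos hr, sign_of_pos (mul_pos hc hr)]

theorem abs_sub_of_abs_eq_abs {a b : ℝ} (h : |a| = |b|) :
    |a - b| = |a| + sign (-(a * b)) * |a| := by
  rcases eq_or_ne a 0 with rfl | ha
  · obtain rfl : b = 0 := abs_eq_zero.mp (h.symm.trans abs_zero)
    simp
  rcases abs_eq_abs.mp h.symm with rfl | rfl
  · rw [sign_of_neg (neg_neg_of_pos (mul_self_pos.mpr ha))]
    simp
  · rw [mul_neg, neg_neg, sign_of_pos (mul_self_pos.mpr ha), sub_neg_eq_add, ← two_mul,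
      abs_mul, abs_two]
    ring

theorem abs_add_of_abs_eq_abs {a b : ℝ} (h : |a| = |b|) :
    |a + b| = |a| - sign (-(a * b)) * |a| := by
  rw [← sub_neg_eq_add, abs_sub_of_abs_eq_abs (h.trans (abs_neg b).symm), mul_neg, neg_neg,
    sign_neg]
  ring

end Real

section YawTorque

variable {c d x t : ℝ}

theorem abs_mul_sub_mul_of_mul_abs_eq (hc : 0 < c) (hd : 0 < d) (h : c * |x| = d * |t|) :
    |c * x - d * t| = c * |x| + Real.sign (-(x * t)) * (c * |x|) := by
  have habs : |c * x| = |d * t| := by rw [abs_mul, abs_mul, abs_of_pos hc, abs_of_pos hd, h]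
  rw [Real.abs_sub_of_abs_eq_abs habs, abs_mul, abs_of_pos hc,
    show -(c * x * (d * t)) = (c * d) * -(x * t) by ring, Real.sign_mul_of_pos_s4 (mul_pos hc hd)]

theorem abs_mul_add_mul_of_mul_abs_eq (hc : 0 < c) (hd : 0 < d) (h : c * |x| = d * |t|) :
    |c * x + d * t| = c * |x| - Real.sign (-(x * t)) * (c * |x|) := by
  have habs : |c * x| = |d * t| := by rw [abs_mul, abs_mul, abs_of_pos hc, abs_of_pos hd, h]
  rw [Real.abs_add_of_abs_eq_abs habs, abs_mul, abs_of_pos hc,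
    show -(c * x * (d * t)) = (c * d) * -(x * t) by ring, Real.sign_mul_of_pos_s4 (mul_pos hc hd)]

end YawTorque

theorem yaw_unique_when_saturated_general
    (X Y μ fx fy fz τx τy : ℝ) (hX : 0 < X) (hY : 0 < Y) (hμ : 0 < μ)
    (h1 : |fx| = μ * fz) (h2 : |τx| = Y * fz)
    (h3 : |fy| = μ * fz) (h4 : |τy| = X * fz) :
    (-μ * (X + Y) * fz + |Y * fx - μ * τx| + |X * fy - μ * τy|) =
      (μ * (X + Y) * fz - |Y * fx + μ * τx| - |X * fy + μ * τy|) ∧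
    (-μ * (X + Y) * fz + |Y * fx - μ * τx| + |X * fy - μ * τy|) =
      Real.sign (-(fx * τx)) * min (Y * |fx|) (μ * |τx|) +
        Real.sign (-(fy * τy)) * min (X * |fy|) (μ * |τy|) := by
  have hx : Y * |fx| = μ * |τx| := by rw [h1, h2]; ring
  have hy : X * |fy| = μ * |τy| := by rw [h3, h4]; ring
  rw [abs_mul_sub_mul_of_mul_abs_eq hY hμ hx, abs_mul_add_mul_of_mul_abs_eq hY hμ hx,
    abs_mul_sub_mul_of_mul_abs_eq hX hμ hy, abs_mul_add_mul_of_mul_abs_eq hX hμ hy,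
    hx, hy, min_self, min_self, h2, h4]
  constructor <;> ring

/-- When the other wrench-cone constraints are saturated, the yaw-torque
interval degenerates to the single safe value. -/
theorem yaw_unique_when_saturated
    (X Y μ fx fy fz τx τy : ℝ) (hX : 0 < X) (hY : 0 < Y) (hμ : 0 < μ)
    (hfz : 0 < fz)
    (h1 : |fx| = μ * fz) (h2 : |τx| = Y * fz)
    (h3 : |fy| = μ * fz) (h4 : |τy| = X * fz)
    (hsat : max (Y * |fx|) (μ * |τx|) + max (X * |fy|) (μ * |τy|) =
      μ * (X + Y) * fz) :
    (-μ * (X + Y) * fz + |Y * fx - μ * τx| + |X * fy - μ * τy|) =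
      (μ * (X + Y) * fz - |Y * fx + μ * τx| - |X * fy + μ * τy|) ∧
    (-μ * (X + Y) * fz + |Y * fx - μ * τx| + |X * fy - μ * τy|) =
      Real.sign (-(fx * τx)) * min (Y * |fx|) (μ * |τx|) +
        Real.sign (-(fy * τy)) * min (X * |fy|) (μ * |τy|) :=
  yaw_unique_when_saturated_general X Y μ fx fy fz τx τy hX hY hμ h1 h2 h3 h4
end

section
/- Let μ > 0, p_x, p_y > 0 with p_x + p_y = 1. Fix K₁, K₂, K₃ ∈ ℝ. There exist C₁, C₂ ∈ [−1,1] and γ_x, γ_x', γ_y, γ_y' ∈ ℝ with K₁ = γ_x + γ_x', K₂ = γ_y + γ_y', K₃ = p_x(γ_y − γ_y') − p_y(γ_x − γ_x'), 2|γ_x| ≤ 1 + C₁, 2|γ_x'| ≤ 1 − C₁, 2|γ_y| ≤ 1 − C₂, 2|γ_y'| ≤ 1 + C₂, if and only if |K₁| ≤ 1, |K₂| ≤ 1, and there exist C₁, C₂ ∈ [−1,1] with −1 + p_y|K₁ − C₁| + p_x|K₂ − C₂| ≤ K₃ ≤ 1 − p_y|K₁ + C₁| − p_x|K₂ + C₂|.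 -/
/-!
Writing `γ = (K + d) / 2` and `γ' = (K - d) / 2`, each pair `(γ, γ')` with prescribed sum `K`
is parametrized by its difference `d`, and its two constraints say exactly that `d` lies in the
interval `[-1 + |K + C|, 1 - |K - C|]`, which is nonempty iff `|K| ≤ 1` (given `|C| ≤ 1`).
Since `K₃ = p_x d_y - p_y d_x` is monotone in each difference and the product of two intervals is
connected, the attainable values of `K₃` form the interval between the values at the corners;
`p_x + p_y = 1` turns its endpoints into the stated bounds.
-/

open Set

def gammaDiffInterval (K C : ℝ) : Set ℝ := Icc (-1 + |K + C|) (1 - |K - C|)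

theorem mem_gammaDiffInterval_iff {K C d : ℝ} :
    d ∈ gammaDiffInterval K C ↔ |K + d| ≤ 1 + C ∧ |K - d| ≤ 1 - C := by
  rw [gammaDiffInterval, mem_Icc, neg_add_le_iff_le_add, le_sub_comm]
  simp only [abs_le]
  constructor <;> intro h <;> refine ⟨⟨?_, ?_⟩, ?_, ?_⟩ <;> linarith

theorem exists_gamma_pair_iff {K C d : ℝ} :
    (∃ γ γ' : ℝ, K = γ + γ' ∧ d = γ - γ' ∧ 2 * |γ| ≤ 1 + C ∧ 2 * |γ'| ≤ 1 - C) ↔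
      d ∈ gammaDiffInterval K C := by
  have two_mul_abs_half (x : ℝ) : 2 * |x / 2| = |x| := by
    rw [abs_div, abs_two]; ring
  rw [mem_gammaDiffInterval_iff]
  constructor
  · rintro ⟨γ, γ', rfl, rfl, h, h'⟩
    rw [show γ + γ' + (γ - γ') = 2 * γ by ring, show γ + γ' - (γ - γ') = 2 * γ' by ring,
      abs_mul, abs_mul, abs_two]
    exact ⟨h, h'⟩
  · rintro ⟨h, h'⟩
    exact ⟨(K + d) / 2, (K - d) / 2, by ring, by ring,
      (two_mul_abs_half _).trans_le h, (two_mul_abs_half _).trans_le h'⟩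

theorem gammaDiffInterval_nonempty_iff {K C : ℝ} :
    (gammaDiffInterval K C).Nonempty ↔ |K| ≤ 1 ∧ |C| ≤ 1 := by
  rw [gammaDiffInterval, nonempty_Icc]
  constructor
  · intro h
    have hK : |(K + C) + (K - C)| ≤ |K + C| + |K - C| := abs_add_le _ _
    have hC : |(K + C) - (K - C)| ≤ |K + C| + |K - C| := abs_sub _ _
    rw [show (K + C) + (K - C) = 2 * K by ring, abs_mul, abs_two] at hK
    rw [show (K + C) - (K - C) = 2 * C by ring, abs_mul, abs_two] at hC
    constructor <;> linarith
  · rintro ⟨hK, hC⟩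
    rw [abs_le] at hK hC
    rcases abs_cases (K + C) with ⟨h₁, -⟩ | ⟨h₁, -⟩ <;>
      rcases abs_cases (K - C) with ⟨h₂, -⟩ | ⟨h₂, -⟩ <;> linarith

theorem exists_mem_Icc_mul_sub_mul_eq_iff {p q a b c d z : ℝ} (hp : 0 ≤ p) (hq : 0 ≤ q)
    (hab : a ≤ b) (hcd : c ≤ d) :
    (∃ x ∈ Icc a b, ∃ y ∈ Icc c d, p * y - q * x = z) ↔
      z ∈ Icc (p * c - q * b) (p * d - q * a) := by
  constructor
  · rintro ⟨x, ⟨hax, hxb⟩, y, ⟨hcy, hyd⟩, rfl⟩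
    exact ⟨sub_le_sub (mul_le_mul_of_nonneg_left hcy hp) (mul_le_mul_of_nonneg_left hxb hq),
      sub_le_sub (mul_le_mul_of_nonneg_left hyd hp) (mul_le_mul_of_nonneg_left hax hq)⟩
  · intro hz
    let f : ℝ × ℝ → ℝ := fun xy => p * xy.2 - q * xy.1
    have hconn : IsPreconnected (f '' (Icc a b ×ˢ Icc c d)) :=
      (isPreconnected_Icc.prod isPreconnected_Icc).image f (by fun_prop)
    have hbc : f (b, c) ∈ f '' (Icc a b ×ˢ Icc c d) :=
      mem_image_of_mem f ⟨right_mem_Icc.2 hab, left_mem_Icc.2 hcd⟩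
    have had : f (a, d) ∈ f '' (Icc a b ×ˢ Icc c d) :=
      mem_image_of_mem f ⟨left_mem_Icc.2 hab, right_mem_Icc.2 hcd⟩
    obtain ⟨⟨x, y⟩, ⟨hx, hy⟩, rfl⟩ := hconn.Icc_subset hbc had hz
    exact ⟨x, hx, y, hy, rfl⟩

theorem gamma_elimination_general
    (px py K₁ K₂ K₃ : ℝ) (hpx : 0 < px) (hpy : 0 < py)
    (hsum : px + py = 1) :
    (∃ C₁ C₂ γx γx' γy γy' : ℝ,
        C₁ ∈ Set.Icc (-1 : ℝ) 1 ∧ C₂ ∈ Set.Icc (-1 : ℝ) 1 ∧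
        K₁ = γx + γx' ∧ K₂ = γy + γy' ∧
        K₃ = px * (γy - γy') - py * (γx - γx') ∧
        2 * |γx| ≤ 1 + C₁ ∧ 2 * |γx'| ≤ 1 - C₁ ∧
        2 * |γy| ≤ 1 - C₂ ∧ 2 * |γy'| ≤ 1 + C₂) ↔
    (|K₁| ≤ 1 ∧ |K₂| ≤ 1 ∧
      ∃ C₁ C₂ : ℝ, C₁ ∈ Set.Icc (-1 : ℝ) 1 ∧ C₂ ∈ Set.Icc (-1 : ℝ) 1 ∧
        -1 + py * |K₁ - C₁| + px * |K₂ - C₂| ≤ K₃ ∧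
        K₃ ≤ 1 - py * |K₁ + C₁| - px * |K₂ + C₂|) := by
  -- The `y`-pair is an `x`-pair with `C := -C₂`.
  constructor
  · rintro ⟨C₁, C₂, γx, γx', γy, γy', hC₁, hC₂, hK₁, hK₂, hK₃, hx, hx', hy, hy'⟩
    have hdx : γx - γx' ∈ gammaDiffInterval K₁ C₁ :=
      exists_gamma_pair_iff.1 ⟨γx, γx', hK₁, rfl, hx, hx'⟩
    have hdy : γy - γy' ∈ gammaDiffInterval K₂ (-C₂) :=
      exists_gamma_pair_iff.1
        ⟨γy, γy', hK₂, rfl, by rwa [← sub_eq_add_neg], by rwa [sub_neg_eq_add]⟩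
    obtain ⟨hlo, hhi⟩ := (exists_mem_Icc_mul_sub_mul_eq_iff hpx.le hpy.le
      (nonempty_Icc.1 ⟨_, hdx⟩) (nonempty_Icc.1 ⟨_, hdy⟩)).1 ⟨_, hdx, _, hdy, hK₃.symm⟩
    simp only [← sub_eq_add_neg, sub_neg_eq_add] at hlo hhi
    exact ⟨(gammaDiffInterval_nonempty_iff.1 ⟨_, hdx⟩).1,
      (gammaDiffInterval_nonempty_iff.1 ⟨_, hdy⟩).1, C₁, C₂, hC₁, hC₂, by linarith, by linarith⟩
  · rintro ⟨hK₁, hK₂, C₁, C₂, hC₁, hC₂, hlo, hhi⟩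
    have hIx := gammaDiffInterval_nonempty_iff.2 ⟨hK₁, abs_le.2 hC₁⟩
    have hIy := gammaDiffInterval_nonempty_iff.2 ⟨hK₂, (abs_neg C₂).trans_le (abs_le.2 hC₂)⟩
    obtain ⟨dx, hdx, dy, hdy, hK₃⟩ := (exists_mem_Icc_mul_sub_mul_eq_iff (z := K₃)
      hpx.le hpy.le (nonempty_Icc.1 hIx) (nonempty_Icc.1 hIy)).2
      (by simp only [mem_Icc, ← sub_eq_add_neg, sub_neg_eq_add]; constructor <;> linarith)
    obtain ⟨γx, γx', hK₁', rfl, hx, hx'⟩ := exists_gamma_pair_iff.2 hdx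
    obtain ⟨γy, γy', hK₂', rfl, hy, hy'⟩ := exists_gamma_pair_iff.2 hdy
    exact ⟨C₁, C₂, γx, γx', γy, γy', hC₁, hC₂, hK₁', hK₂', hK₃.symm, hx, hx',
      by rwa [← sub_eq_add_neg] at hy, by rwa [sub_neg_eq_add] at hy'⟩

/-- Fourier–Motzkin elimination of the γ variables in the normalized system. -/
theorem gamma_elimination
    (μ px py K₁ K₂ K₃ : ℝ) (hμ : 0 < μ) (hpx : 0 < px) (hpy : 0 < py)
    (hsum : px + py = 1) :
    (∃ C₁ C₂ γx γx' γy γy' : ℝ,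
        C₁ ∈ Set.Icc (-1 : ℝ) 1 ∧ C₂ ∈ Set.Icc (-1 : ℝ) 1 ∧
        K₁ = γx + γx' ∧ K₂ = γy + γy' ∧
        K₃ = px * (γy - γy') - py * (γx - γx') ∧
        2 * |γx| ≤ 1 + C₁ ∧ 2 * |γx'| ≤ 1 - C₁ ∧
        2 * |γy| ≤ 1 - C₂ ∧ 2 * |γy'| ≤ 1 + C₂) ↔
    (|K₁| ≤ 1 ∧ |K₂| ≤ 1 ∧
      ∃ C₁ C₂ : ℝ, C₁ ∈ Set.Icc (-1 : ℝ) 1 ∧ C₂ ∈ Set.Icc (-1 : ℝ) 1 ∧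
        -1 + py * |K₁ - C₁| + px * |K₂ - C₂| ≤ K₃ ∧
        K₃ ≤ 1 - py * |K₁ + C₁| - px * |K₂ + C₂|) :=
  gamma_elimination_general px py K₁ K₂ K₃ hpx hpy hsum
end

section
/- Let μ, X, Y > 0. The rectangular wrench cone equals the image under the linear map Φ : (f₁, f₂, f₃, f₄) ↦ (Σfᵢˣ, Σfᵢʸ, Σfᵢᶻ, Y(f₁ᶻ−f₂ᶻ−f₃ᶻ+f₄ᶻ), −X(f₁ᶻ+f₂ᶻ−f₃ᶻ−f₄ᶻ), X(f₁ʸ+f₂ʸ−f₃ʸ−f₄ʸ) − Y(f₁ˣ−f₂ˣ−f₃ˣ+f₄ˣ)) of the product of four linearized friction cones K = {(a,b,c) : |a| ≤ μc, |b| ≤ μc, c ≥ 0}. In particular, since Φ is linear and K⁴ is a polyhedral convex cone, the wrench cone is a polyhedral convex cone in ℝ⁶ with the 16 facet inequalities listed in the paper. -/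
/-!
Write `f i = (aᵢ, bᵢ, cᵢ)`. The signs in `wrenchMap` place corners `0, 3` on the edge `y = Y`,
corners `1, 2` on `y = -Y`, corners `0, 1` on `x = X` and corners `2, 3` on `x = -X`.

The normal forces only enter `w 2, w 3, w 4`; they fix the total loads of the four edges, and a
nonnegative `2 × 2` array with these row and column sums exists iff `|w 3| ≤ Y w 2` and
`|w 4| ≤ X w 2`. The tangential forces `aᵢ` (resp. `bᵢ`) only enter through their sums along the
edges `y = ±Y` (resp. `x = ±X`), and an edge sum splits between the two corners of the edge iff it
obeys the friction bound for the load of the edge. Hence `-w 5` is a sum of two independent yaw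
torques, each ranging over an interval (`edgeTorques`); a Minkowski sum of intervals is the
interval of the summed endpoints, which gives the two bounds on `w 5`, and the two intervals are
nonempty iff `|w 0| ≤ μ w 2` and `|w 1| ≤ μ w 2`.
-/

/-- The linearized friction cone at a contact point. -/
def frictionCone (μ : ℝ) : Set (Fin 3 → ℝ) :=
  {v | |v 0| ≤ μ * v 2 ∧ |v 1| ≤ μ * v 2 ∧ 0 ≤ v 2}

/-- The linear map sending four corner contact forces to the resultant wrench
at the center of the rectangle `[-X,X] × [-Y,Y]`. -/
def wrenchMap (X Y : ℝ) (f : Fin 4 → Fin 3 → ℝ) : Fin 6 → ℝ :=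
  ![f 0 0 + f 1 0 + f 2 0 + f 3 0,
    f 0 1 + f 1 1 + f 2 1 + f 3 1,
    f 0 2 + f 1 2 + f 2 2 + f 3 2,
    Y * (f 0 2 - f 1 2 - f 2 2 + f 3 2),
    -X * (f 0 2 + f 1 2 - f 2 2 - f 3 2),
    X * (f 0 1 + f 1 1 - f 2 1 - f 3 1) - Y * (f 0 0 - f 1 0 - f 2 0 + f 3 0)]

open Set
open scoped Pointwise

section Intervals

variable {α : Type*} [AddCommGroup α] [LinearOrder α] [IsOrderedAddMonoid α] {a b c d x : α}

lemma Set.mem_Icc_add_Icc_iff :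
    x ∈ Icc a b + Icc c d ↔ a ≤ b ∧ c ≤ d ∧ a + c ≤ x ∧ x ≤ b + d := by
  by_cases hab : a ≤ b
  · by_cases hcd : c ≤ d
    · simp [Icc_add_Icc hab hcd, hab, hcd]
    · simp [hcd]
  · simp [hab]

lemma exists_add_eq_of_abs_le_add (hc : 0 ≤ c) (hd : 0 ≤ d) (hx : |x| ≤ c + d) :
    ∃ y z, |y| ≤ c ∧ |z| ≤ d ∧ y + z = x := by
  have hx' : x ∈ Icc (-c) c + Icc (-d) d := by
    rw [mem_Icc_add_Icc_iff, ← neg_add]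
    exact ⟨neg_le_self hc, neg_le_self hd, abs_le.1 hx⟩
  obtain ⟨y, hy, z, hz, rfl⟩ := hx'
  exact ⟨y, z, abs_le.2 hy, abs_le.2 hz, rfl⟩

end Intervals

lemma abs_add_add_abs_sub_le_two_mul_iff {K : Type*} [Field K] [LinearOrder K]
    [IsStrictOrderedRing K] {x y b : K} :
    |x + y| + |x - y| ≤ 2 * b ↔ |x| ≤ b ∧ |y| ≤ b := by
  rcases abs_cases (x + y) with ⟨h₁, _⟩ | ⟨h₁, _⟩ <;>
    rcases abs_cases (x - y) with ⟨h₂, _⟩ | ⟨h₂, _⟩ <;>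
    rw [h₁, h₂, abs_le, abs_le] <;>
    exact ⟨fun h ↦ ⟨⟨by linarith, by linarith⟩, by linarith, by linarith⟩,
      fun ⟨⟨_, _⟩, _, _⟩ ↦ by linarith⟩

/-- The yaw torques `t = L * (α₊ - α₋)` exerted by tangential forces `α₊ + α₋ = F` on two parallel
edges at lever arms `±L` whose normal loads `(L * n ± m) / (2 * L)` have sum `n` and moment `m`,
subject to the friction bounds `|α±| ≤ μ * (L * n ± m) / (2 * L)`. -/
def edgeTorques (μ L F n m : ℝ) : Set ℝ :=
  {t | |L * F + t| ≤ μ * (L * n + m) ∧ |L * F - t| ≤ μ * (L * n - m)}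

lemma edgeTorques_eq_Icc (μ L F n m : ℝ) :
    edgeTorques μ L F n m =
      Icc (|L * F + μ * m| - μ * (L * n)) (μ * (L * n) - |L * F - μ * m|) := by
  ext t
  rw [edgeTorques, mem_ofPred_eq, mem_Icc, sub_le_iff_le_add, le_sub_comm, abs_le, abs_le, abs_le,
    abs_le]
  constructor <;> rintro ⟨⟨_, _⟩, _, _⟩ <;>
    exact ⟨⟨by linarith, by linarith⟩, by linarith, by linarith⟩

lemma edgeTorques_lower_le_upper_iff {μ L F n m : ℝ} (hμ : 0 < μ) (hL : 0 < L) :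
    |L * F + μ * m| - μ * (L * n) ≤ μ * (L * n) - |L * F - μ * m| ↔ |F| ≤ μ * n ∧ |m| ≤ L * n := by
  rw [sub_le_iff_le_add, sub_add_eq_add_sub, le_sub_iff_add_le, ← two_mul,
    abs_add_add_abs_sub_le_two_mul_iff, abs_mul, abs_mul, abs_of_pos hμ, abs_of_pos hL,
    mul_le_mul_iff_right₀ hμ, mul_left_comm μ L n, mul_le_mul_iff_right₀ hL]

lemma exists_edge_friction_iff {μ L F n m t c₁ c₂ c₃ c₄ : ℝ} (hμ : 0 ≤ μ) (hL : 0 < L)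
    (hc₁ : 0 ≤ c₁) (hc₂ : 0 ≤ c₂) (hc₃ : 0 ≤ c₃) (hc₄ : 0 ≤ c₄)
    (hn : c₁ + c₂ + c₃ + c₄ = n) (hm : L * (c₁ + c₂ - c₃ - c₄) = m) :
    (∃ a₁ a₂ a₃ a₄ : ℝ, |a₁| ≤ μ * c₁ ∧ |a₂| ≤ μ * c₂ ∧ |a₃| ≤ μ * c₃ ∧ |a₄| ≤ μ * c₄ ∧
      a₁ + a₂ + a₃ + a₄ = F ∧ L * (a₁ + a₂ - a₃ - a₄) = t) ↔ t ∈ edgeTorques μ L F n m := by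
  subst hn hm
  have h2L : 0 < 2 * L := by positivity
  constructor
  · rintro ⟨a₁, a₂, a₃, a₄, h₁, h₂, h₃, h₄, rfl, rfl⟩
    have h₁₂ : |a₁ + a₂| ≤ μ * (c₁ + c₂) := (abs_add_le _ _).trans (by linarith)
    have h₃₄ : |a₃ + a₄| ≤ μ * (c₃ + c₄) := (abs_add_le _ _).trans (by linarith)
    constructor
    · calc |L * (a₁ + a₂ + a₃ + a₄) + L * (a₁ + a₂ - a₃ - a₄)| = 2 * L * |a₁ + a₂| := by
            rw [← abs_of_pos h2L, ← abs_mul]; ring_nf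
        _ ≤ 2 * L * (μ * (c₁ + c₂)) := by gcongr
        _ = _ := by ring
    · calc |L * (a₁ + a₂ + a₃ + a₄) - L * (a₁ + a₂ - a₃ - a₄)| = 2 * L * |a₃ + a₄| := by
            rw [← abs_of_pos h2L, ← abs_mul]; ring_nf
        _ ≤ 2 * L * (μ * (c₃ + c₄)) := by gcongr
        _ = _ := by ring
  · rintro ⟨hplus, hminus⟩
    have hα : |(L * F + t) / (2 * L)| ≤ μ * c₁ + μ * c₂ := by
      rw [abs_div, abs_of_pos h2L, div_le_iff₀ h2L]; linarith
    have hβ : |(L * F - t) / (2 * L)| ≤ μ * c₃ + μ * c₄ := by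
      rw [abs_div, abs_of_pos h2L, div_le_iff₀ h2L]; linarith
    obtain ⟨a₁, a₂, h₁, h₂, h₁₂⟩ := exists_add_eq_of_abs_le_add (by positivity) (by positivity) hα
    obtain ⟨a₃, a₄, h₃, h₄, h₃₄⟩ := exists_add_eq_of_abs_le_add (by positivity) (by positivity) hβ
    refine ⟨a₁, a₂, a₃, a₄, h₁, h₂, h₃, h₄, ?_, ?_⟩
    · rw [add_assoc _ a₃, h₁₂, h₃₄]; field_simp; ring
    · rw [sub_sub, h₁₂, h₃₄]; field_simp; ring

lemma exists_normal_forces_iff {X Y n mx my : ℝ} (hX : 0 < X) (hY : 0 < Y) :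
    (∃ c : Fin 4 → ℝ, (∀ i, 0 ≤ c i) ∧ c 0 + c 1 + c 2 + c 3 = n ∧
      Y * (c 0 - c 1 - c 2 + c 3) = mx ∧ -X * (c 0 + c 1 - c 2 - c 3) = my) ↔
    |mx| ≤ Y * n ∧ |my| ≤ X * n := by
  constructor
  · rintro ⟨c, hc, rfl, rfl, rfl⟩
    have := hc 0; have := hc 1; have := hc 2; have := hc 3
    rw [abs_mul, abs_mul, abs_neg, abs_of_pos hX, abs_of_pos hY]
    constructor <;> gcongr <;> rw [abs_le] <;> constructor <;> linarith
  · rintro ⟨hx, hy⟩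
    obtain ⟨hx₁, hx₂⟩ := abs_le.1 hx
    obtain ⟨hy₁, hy₂⟩ := abs_le.1 hy
    -- `p`, `q` are the loads of the edges `y = Y` and `y = -Y`; `r` is the load of the edge `x = X`
    obtain ⟨p, hp⟩ : ∃ p, p = (Y * n + mx) / (2 * Y) := ⟨_, rfl⟩
    obtain ⟨q, hq⟩ : ∃ q, q = (Y * n - mx) / (2 * Y) := ⟨_, rfl⟩
    obtain ⟨r, hr⟩ : ∃ r, r = (X * n - my) / (2 * X) := ⟨_, rfl⟩
    have hpq : p + q = n := by rw [hp, hq]; field_simp; ring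
    have hsplit : r ∈ Icc 0 p + Icc 0 q := by
      rw [mem_Icc_add_Icc_iff, add_zero, hpq, hp, hq, hr, div_le_iff₀ (by positivity)]
      exact ⟨div_nonneg (by linarith) (by positivity), div_nonneg (by linarith) (by positivity),
        div_nonneg (by linarith) (by positivity), by linarith⟩
    obtain ⟨c₀, ⟨hc₀, hc₀p⟩, c₁, ⟨hc₁, hc₁q⟩, hc₀₁⟩ := hsplit
    beta_reduce at hc₀₁
    refine ⟨![c₀, c₁, q - c₁, p - c₀], fun i ↦ ?_, ?_, ?_, ?_⟩
    · fin_cases i <;> simp [hc₀, hc₁, hc₀p, hc₁q]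
    all_goals simp only [Fin.isValue, Matrix.cons_val_zero, Matrix.cons_val_one, Matrix.cons_val]
    · linarith
    · rw [show c₀ - c₁ - (q - c₁) + (p - c₀) = p - q by ring, hp, hq]
      field_simp
      ring
    · rw [show c₀ + c₁ - (q - c₁) - (p - c₀) = 2 * r - n by linarith, hr]
      field_simp
      ring

theorem mem_image_wrenchMap_iff {X Y μ : ℝ} (hX : 0 < X) (hY : 0 < Y) (hμ : 0 ≤ μ)
    {w : Fin 6 → ℝ} :
    w ∈ wrenchMap X Y '' {f | ∀ i, f i ∈ frictionCone μ} ↔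
      (∃ c : Fin 4 → ℝ, (∀ i, 0 ≤ c i) ∧ c 0 + c 1 + c 2 + c 3 = w 2 ∧
        Y * (c 0 - c 1 - c 2 + c 3) = w 3 ∧ -X * (c 0 + c 1 - c 2 - c 3) = w 4) ∧
      -w 5 ∈ edgeTorques μ Y (w 0) (w 2) (w 3) + edgeTorques μ X (w 1) (w 2) (w 4) := by
  constructor
  · rintro ⟨f, hf, rfl⟩
    have hc i : 0 ≤ f i 2 := (hf i).2.2
    refine ⟨⟨fun i ↦ f i 2, hc, rfl, rfl, rfl⟩, Y * (f 0 0 + f 3 0 - f 1 0 - f 2 0), ?_,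
      X * (f 2 1 + f 3 1 - f 0 1 - f 1 1), ?_, ?_⟩
    · refine (exists_edge_friction_iff hμ hY (hc 0) (hc 3) (hc 1) (hc 2) ?_ ?_).1
        ⟨_, _, _, _, (hf 0).1, (hf 3).1, (hf 1).1, (hf 2).1, ?_, rfl⟩ <;>
        simp only [wrenchMap, Matrix.cons_val] <;> ring
    · refine (exists_edge_friction_iff hμ hX (hc 2) (hc 3) (hc 0) (hc 1) ?_ ?_).1
        ⟨_, _, _, _, (hf 2).2.1, (hf 3).2.1, (hf 0).2.1, (hf 1).2.1, ?_, rfl⟩ <;>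
        simp only [wrenchMap, Matrix.cons_val] <;> ring
    · simp only [wrenchMap, Matrix.cons_val]
      ring
  · rintro ⟨⟨c, hc, h2, h3, h4⟩, T, hT, U, hU, hTU⟩
    obtain ⟨a₀, a₃, a₁, a₂, ha₀, ha₃, ha₁, ha₂, ha, hT⟩ :=
      (exists_edge_friction_iff hμ hY (hc 0) (hc 3) (hc 1) (hc 2) (by linarith) (by linarith)).2 hT
    obtain ⟨b₂, b₃, b₀, b₁, hb₂, hb₃, hb₀, hb₁, hb, hU⟩ :=
      (exists_edge_friction_iff hμ hX (hc 2) (hc 3) (hc 0) (hc 1) (by linarith) (by linarith)).2 hU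
    refine ⟨![![a₀, b₀, c 0], ![a₁, b₁, c 1], ![a₂, b₂, c 2], ![a₃, b₃, c 3]], ?_, ?_⟩
    · intro i
      fin_cases i
      · exact ⟨ha₀, hb₀, hc 0⟩
      · exact ⟨ha₁, hb₁, hc 1⟩
      · exact ⟨ha₂, hb₂, hc 2⟩
      · exact ⟨ha₃, hb₃, hc 3⟩
    · ext j
      fin_cases j <;> simp [wrenchMap] <;> linarith

/-- The rectangular wrench cone is the image of the product of the four
linearized friction cones under the wrench map: a polyhedral convex cone with
the 16 facet inequalities of the paper. -/
theorem wrench_cone_eq_image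
    (X Y μ : ℝ) (hX : 0 < X) (hY : 0 < Y) (hμ : 0 < μ) :
    (wrenchMap X Y) '' {f | ∀ i, f i ∈ frictionCone μ} =
    {w : Fin 6 → ℝ | |w 0| ≤ μ * w 2 ∧ |w 1| ≤ μ * w 2 ∧ 0 ≤ w 2 ∧
      |w 3| ≤ Y * w 2 ∧ |w 4| ≤ X * w 2 ∧
      -μ * (X + Y) * w 2 + |Y * w 0 - μ * w 3| + |X * w 1 - μ * w 4| ≤ w 5 ∧
      w 5 ≤ μ * (X + Y) * w 2 - |Y * w 0 + μ * w 3| - |X * w 1 + μ * w 4|} := by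
  ext w
  rw [mem_image_wrenchMap_iff hX hY hμ.le, exists_normal_forces_iff hX hY, edgeTorques_eq_Icc,
    edgeTorques_eq_Icc, mem_Icc_add_Icc_iff, edgeTorques_lower_le_upper_iff hμ hY,
    edgeTorques_lower_le_upper_iff hμ hX, mem_ofPred_eq]
  constructor
  · rintro ⟨-, ⟨h0, h3⟩, ⟨h1, h4⟩, hlo, hhi⟩
    have h2 : 0 ≤ w 2 := nonneg_of_mul_nonneg_right ((abs_nonneg _).trans h3) hY
    exact ⟨h0, h1, h2, h3, h4, by linarith, by linarith⟩
  · rintro ⟨h0, h1, -, h3, h4, hlo, hhi⟩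
    exact ⟨⟨h3, h4⟩, ⟨h0, h3⟩, ⟨h1, h4⟩, by linarith, by linarith⟩
end
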